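/- arXiv:1706.01960 — 3 statements merged into one kernel-verified Lean document; each statement's English description precedes it below -/
import Mathlib

section
/- Let Φ₁, Φ₂ : X → [0,∞) be measurable real-valued functions and set Z_i = ∫_X exp(−Φ_i(x)) dμ₀(x) for i = 1, 2, so that Z₁, Z₂ ∈ (0,1]. Then ∫_X ( √(exp(−Φ₁(x))/Z₁) − √(exp(−Φ₂(x))/Z₂) )² dμ₀(x) ≤ (2/Z₁) ∫_X ( exp(−Φ₁(x)/2) − exp(−Φ₂(x)/2) )² dμ₀(x) + 2 Z₂ ( Z₁^{−1/2} − Z₂^{−1/2} )². -/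
open MeasureTheory

noncomputable section

/-!
Writing `u = exp (-Φ₁ / 2)`, `v = exp (-Φ₂ / 2)`, `a = Z₁^{-1/2}` and `b = Z₂^{-1/2}`, the
integrand on the left is `(a u - b v)² = (a (u - v) + (a - b) v)² ≤ 2 a² (u - v)² + 2 (a - b)² v²`,
and integrating gives the claim since `∫ v² = Z₂`. Boundedness of `u` and `v` by `1` makes every
function in sight integrable and puts `Z₁, Z₂` in `(0, 1]`.
-/

lemma sq_mul_sub_mul_le (a b u v : ℝ) :
    (a * u - b * v) ^ 2 ≤ 2 * a ^ 2 * (u - v) ^ 2 + 2 * (a - b) ^ 2 * v ^ 2 := by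
  calc (a * u - b * v) ^ 2 = (a * (u - v) + (a - b) * v) ^ 2 := by ring
    _ ≤ 2 * ((a * (u - v)) ^ 2 + ((a - b) * v) ^ 2) := add_sq_le
    _ = 2 * a ^ 2 * (u - v) ^ 2 + 2 * (a - b) ^ 2 * v ^ 2 := by ring

section Integral

variable {X : Type*} [MeasurableSpace X] {μ : Measure X}

lemma integral_sq_mul_sub_mul_le {u v : X → ℝ} (huv : Integrable (fun x => (u x - v x) ^ 2) μ)
    (hv : Integrable (fun x => v x ^ 2) μ) (a b : ℝ) :
    ∫ x, (a * u x - b * v x) ^ 2 ∂μ ≤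
      2 * a ^ 2 * ∫ x, (u x - v x) ^ 2 ∂μ + 2 * (a - b) ^ 2 * ∫ x, v x ^ 2 ∂μ := by
  have hbound : Integrable (fun x => 2 * a ^ 2 * (u x - v x) ^ 2 + 2 * (a - b) ^ 2 * v x ^ 2) μ :=
    (huv.const_mul _).add (hv.const_mul _)
  calc ∫ x, (a * u x - b * v x) ^ 2 ∂μ
      ≤ ∫ x, (2 * a ^ 2 * (u x - v x) ^ 2 + 2 * (a - b) ^ 2 * v x ^ 2) ∂μ :=
        integral_mono_of_nonneg (.of_forall fun _ => sq_nonneg _) hbound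
          (.of_forall fun x => sq_mul_sub_mul_le a b (u x) (v x))
    _ = 2 * a ^ 2 * ∫ x, (u x - v x) ^ 2 ∂μ + 2 * (a - b) ^ 2 * ∫ x, v x ^ 2 ∂μ := by
        rw [integral_add (huv.const_mul _) (hv.const_mul _), integral_const_mul,
          integral_const_mul]

lemma memLp_exp_of_nonpos [IsFiniteMeasure μ] {ψ : X → ℝ} (hψ : Measurable ψ)
    (hψ_nonpos : ∀ x, ψ x ≤ 0) (p : ENNReal) : MemLp (fun x => Real.exp (ψ x)) p μ :=
  .of_bound hψ.exp.aestronglyMeasurable 1 <| .of_forall fun x => by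
    rw [Real.norm_of_nonneg (Real.exp_nonneg _)]
    exact Real.exp_le_one_iff.2 (hψ_nonpos x)

lemma integral_exp_mem_Ioc [IsProbabilityMeasure μ] {ψ : X → ℝ} (hψ : Measurable ψ)
    (hψ_nonpos : ∀ x, ψ x ≤ 0) : ∫ x, Real.exp (ψ x) ∂μ ∈ Set.Ioc 0 1 := by
  have hint : Integrable (fun x => Real.exp (ψ x)) μ :=
    memLp_one_iff_integrable.1 (memLp_exp_of_nonpos hψ hψ_nonpos 1)
  refine ⟨integral_exp_pos hint, ?_⟩
  calc ∫ x, Real.exp (ψ x) ∂μ ≤ ∫ _, (1 : ℝ) ∂μ :=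
        integral_mono hint (integrable_const 1) fun x => Real.exp_le_one_iff.2 (hψ_nonpos x)
    _ = 1 := by simp

end Integral

lemma sqrt_exp_div (t z : ℝ) : Real.sqrt (Real.exp t / z) = (Real.sqrt z)⁻¹ * Real.exp (t / 2) := by
  rw [Real.sqrt_div (Real.exp_nonneg t), Real.exp_half, div_eq_inv_mul]

lemma exp_half_sq (t : ℝ) : Real.exp (t / 2) ^ 2 = Real.exp t := by
  rw [← Real.exp_nat_mul]
  ring_nf

/-- Let Φ₁, Φ₂ : X → [0,∞) be measurable real-valued functions on a probability
space (X, 𝔛, μ₀) and set Z_i = ∫_X exp(−Φ_i(x)) dμ₀(x) for i = 1, 2, so that Z₁, Z₂ ∈ (0,1].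
Then ∫_X ( √(exp(−Φ₁(x))/Z₁) − √(exp(−Φ₂(x))/Z₂) )² dμ₀(x)
  ≤ (2/Z₁) ∫_X ( exp(−Φ₁(x)/2) − exp(−Φ₂(x)/2) )² dμ₀(x) + 2 Z₂ ( Z₁^{−1/2} − Z₂^{−1/2} )². -/
theorem stmt_7
    {X : Type*} [MeasurableSpace X] (μ₀ : Measure X) [IsProbabilityMeasure μ₀]
    (Φ₁ Φ₂ : X → ℝ) (hΦ₁_meas : Measurable Φ₁) (hΦ₂_meas : Measurable Φ₂)
    (hΦ₁_nonneg : ∀ x, 0 ≤ Φ₁ x) (hΦ₂_nonneg : ∀ x, 0 ≤ Φ₂ x)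
    (Z₁ Z₂ : ℝ)
    (hZ₁ : Z₁ = ∫ x, Real.exp (-Φ₁ x) ∂μ₀)
    (hZ₂ : Z₂ = ∫ x, Real.exp (-Φ₂ x) ∂μ₀) :
    (0 < Z₁ ∧ Z₁ ≤ 1) ∧ (0 < Z₂ ∧ Z₂ ≤ 1) ∧
    (∫ x, (Real.sqrt (Real.exp (-Φ₁ x) / Z₁) - Real.sqrt (Real.exp (-Φ₂ x) / Z₂)) ^ 2 ∂μ₀) ≤
      (2 / Z₁) * (∫ x, (Real.exp (-Φ₁ x / 2) - Real.exp (-Φ₂ x / 2)) ^ 2 ∂μ₀) +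
        2 * Z₂ * ((Real.sqrt Z₁)⁻¹ - (Real.sqrt Z₂)⁻¹) ^ 2 := by
  have hZ₁_mem : Z₁ ∈ Set.Ioc 0 1 :=
    hZ₁ ▸ integral_exp_mem_Ioc hΦ₁_meas.neg fun x => neg_nonpos.2 (hΦ₁_nonneg x)
  have hZ₂_mem : Z₂ ∈ Set.Ioc 0 1 :=
    hZ₂ ▸ integral_exp_mem_Ioc hΦ₂_meas.neg fun x => neg_nonpos.2 (hΦ₂_nonneg x)
  refine ⟨hZ₁_mem, hZ₂_mem, ?_⟩
  have hu : MemLp (fun x => Real.exp (-Φ₁ x / 2)) 2 μ₀ :=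
    memLp_exp_of_nonpos (ψ := fun x => -Φ₁ x / 2) (by fun_prop)
      (fun x => by linarith [hΦ₁_nonneg x]) 2
  have hv : MemLp (fun x => Real.exp (-Φ₂ x / 2)) 2 μ₀ :=
    memLp_exp_of_nonpos (ψ := fun x => -Φ₂ x / 2) (by fun_prop)
      (fun x => by linarith [hΦ₂_nonneg x]) 2
  have hv_sq : ∫ x, Real.exp (-Φ₂ x / 2) ^ 2 ∂μ₀ = Z₂ := by simp only [exp_half_sq, hZ₂]
  have hZ₁_sq : 2 * (Real.sqrt Z₁)⁻¹ ^ 2 = 2 / Z₁ := by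
    rw [inv_pow, Real.sq_sqrt hZ₁_mem.1.le, div_eq_mul_inv]
  simp only [sqrt_exp_div]
  calc _ ≤ _ := integral_sq_mul_sub_mul_le (hu.sub hv).integrable_sq hv.integrable_sq _ _
    _ = _ := by rw [hv_sq, hZ₁_sq]; ring
end
end

section
/- Let μ₀ be a Borel probability measure on C(D̄) (with the supremum norm) such that ∫ ‖u‖_{L¹(D)}² dμ₀(u) < ∞, and for y ∈ ℝ^J set Z(y) = ∫ exp(−Φ(u,y)) dμ₀(u), which lies in (0,1]. Then for every ρ > 0 there exists a constant C = C(ρ) such that for all y, y' ∈ ℝ^J with |y| < ρ and |y'| < ρ, one has ∫ ( √(exp(−Φ(u,y))/Z(y)) − √(exp(−Φ(u,y'))/Z(y')) )² dμ₀(u) ≤ C² |y − y'|²; that is, the Hellinger distance between the posterior measures with densities exp(−Φ(·,y))/Z(y) and exp(−Φ(·,y'))/Z(y') with respect to μ₀ is at most C |y − y'|. -/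
/-!
On the ball `‖y‖ < ρ` the potential `Φ(u, y) = Ψ(u) + α⟨Σ⁻¹(y - K u), y - K u⟩`, `α = ε^{-2c}/2`,
is nonnegative, bounded above by `W(u) = Ψ(u) + α‖Σ⁻¹‖(ρ + C_K ‖u‖_{L¹})²` and Lipschitz in `y`
with constant `G(u) = α‖Σ⁻¹‖(2ρ + 2 C_K ‖u‖_{L¹})`. The bound `W` gives `Z(y) ≥ ∫ exp(-W) dμ₀ > 0`,
and the second moment of `‖u‖_{L¹}` puts `G` in `L²(μ₀)`. Splitting
`√(e^{-Φ(u,y)}/Z(y)) - √(e^{-Φ(u,y')}/Z(y'))` as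
`Z(y)^{-1/2} (e^{-Φ(u,y)/2} - e^{-Φ(u,y')/2}) + e^{-Φ(u,y')/2} (Z(y)^{-1/2} - Z(y')^{-1/2})`,
the first term is bounded by `Z(y)^{-1/2} G(u) |y - y'| / 2`, as `exp(-·)` is 1-Lipschitz on
`[0, ∞)`, and the second through `|Z(y) - Z(y')| ≤ ‖G‖_{L¹} |y - y'|`.
-/

open MeasureTheory RealInnerProductSpace

noncomputable section

open Classical in
def extend {d : ℕ} (D : Set (EuclideanSpace ℝ (Fin d))) (u : C(closure D, ℝ)) :
    EuclideanSpace ℝ (Fin d) → ℝ :=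
  fun x => if h : x ∈ closure D then u ⟨x, h⟩ else 0

open Real Bornology

theorem abs_exp_neg_sub_exp_neg_le {s t : ℝ} (hs : 0 ≤ s) (ht : 0 ≤ t) :
    |exp (-s) - exp (-t)| ≤ |s - t| := by
  wlog hst : s ≤ t generalizing s t
  · rw [abs_sub_comm, abs_sub_comm s]; exact this ht hs (le_of_not_ge hst)
  have hexp : exp (-t) = exp (-s) * exp (-(t - s)) := by rw [← exp_add]; ring_nf
  have h1 : 1 - (t - s) ≤ exp (-(t - s)) := by linarith [add_one_le_exp (-(t - s))]
  have h2 : exp (-s) ≤ 1 := exp_le_one_iff.2 (by linarith)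
  rw [abs_of_nonneg (sub_nonneg.2 (exp_le_exp.2 (neg_le_neg hst))), abs_sub_comm,
    abs_of_nonneg (sub_nonneg.2 hst), hexp]
  nlinarith [exp_pos (-s)]

theorem sq_inv_sqrt_sub_inv_sqrt_le {z z' z₀ : ℝ} (h₀ : 0 < z₀) (hz : z₀ ≤ z) (hz' : z₀ ≤ z') :
    ((√z)⁻¹ - (√z')⁻¹) ^ 2 ≤ (z - z') ^ 2 / (4 * z₀ ^ 3) := by
  have hs : √z₀ ≤ √z := sqrt_le_sqrt hz
  have hs' : √z₀ ≤ √z' := sqrt_le_sqrt hz'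
  have hs₀ : 0 < √z₀ := sqrt_pos.2 h₀
  have hsq : √z ^ 2 = z := sq_sqrt (h₀.le.trans hz)
  have hsq' : √z' ^ 2 = z' := sq_sqrt (h₀.le.trans hz')
  have hsq₀ : √z₀ ^ 2 = z₀ := sq_sqrt h₀.le
  have key : (√z)⁻¹ - (√z')⁻¹ = (z' - z) / (√z * √z' * (√z + √z')) := by
    have ha : 0 < √z := hs₀.trans_le hs
    have hb : 0 < √z' := hs₀.trans_le hs'
    rw [eq_div_iff (by positivity)]
    field_simp
    linear_combination hsq' - hsq
  have hden : 2 * √z₀ ^ 3 ≤ √z * √z' * (√z + √z') := by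
    have := mul_le_mul hs hs' hs₀.le (hs₀.le.trans hs)
    nlinarith [mul_le_mul this (add_le_add hs hs') (by positivity) (by positivity)]
  rw [key, div_pow, ← hsq₀, show (z' - z) ^ 2 = (z - z') ^ 2 by ring]
  gcongr
  calc 4 * (√z₀ ^ 2) ^ 3 = (2 * √z₀ ^ 3) ^ 2 := by ring
    _ ≤ _ := by gcongr

theorem sq_exp_neg_half_sub_exp_neg_half_le {s t c : ℝ} (hs : 0 ≤ s) (ht : 0 ≤ t)
    (hc : |s - t| ≤ c) : (exp (-s / 2) - exp (-t / 2)) ^ 2 ≤ c ^ 2 / 4 := by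
  have h : |exp (-(s / 2)) - exp (-(t / 2))| ≤ c / 2 := by
    refine (abs_exp_neg_sub_exp_neg_le (by linarith) (by linarith)).trans ?_
    rw [← sub_div, abs_div, abs_two]
    linarith
  rw [neg_div, neg_div, ← sq_abs]
  linarith [pow_le_pow_left₀ (abs_nonneg _) h 2]

section Hellinger

variable {X : Type*} [MeasurableSpace X] {μ : Measure X} {f g G : X → ℝ} {δ Z₀ : ℝ}

theorem integrable_exp_neg [IsFiniteMeasure μ] (hf : AEMeasurable f μ) (hf0 : ∀ u, 0 ≤ f u) :
    Integrable (fun u => exp (-f u)) μ :=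
  .of_bound hf.neg.exp.aestronglyMeasurable 1 <| ae_of_all _ fun u => by
    simpa [abs_of_pos (exp_pos _)] using hf0 u

theorem integral_exp_neg_mem_Ioc [IsProbabilityMeasure μ] (hf : AEMeasurable f μ)
    (hf0 : ∀ u, 0 ≤ f u) : ∫ u, exp (-f u) ∂μ ∈ Set.Ioc 0 1 := by
  refine ⟨integral_exp_pos (integrable_exp_neg hf hf0), ?_⟩
  calc ∫ u, exp (-f u) ∂μ ≤ ∫ _, 1 ∂μ :=
        integral_mono (integrable_exp_neg hf hf0) (integrable_const 1) fun u =>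
          exp_le_one_iff.2 (neg_nonpos.2 (hf0 u))
    _ = 1 := by simp

theorem abs_integral_exp_neg_sub_le [IsFiniteMeasure μ] (hf : AEMeasurable f μ)
    (hg : AEMeasurable g μ) (hf0 : ∀ u, 0 ≤ f u) (hg0 : ∀ u, 0 ≤ g u) (hG : Integrable G μ)
    (hfg : ∀ u, |f u - g u| ≤ G u * δ) :
    |∫ u, exp (-f u) ∂μ - ∫ u, exp (-g u) ∂μ| ≤ (∫ u, G u ∂μ) * δ := by
  have hint := (integrable_exp_neg hf hf0).sub (integrable_exp_neg hg hg0)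
  rw [← integral_sub (integrable_exp_neg hf hf0) (integrable_exp_neg hg hg0),
    ← integral_mul_const]
  exact (abs_integral_le_integral_abs).trans <| integral_mono hint.abs (hG.mul_const δ) fun u =>
    (abs_exp_neg_sub_exp_neg_le (hf0 u) (hg0 u)).trans (hfg u)

theorem integrable_sq_exp_neg_half_sub [IsFiniteMeasure μ] (hf : AEMeasurable f μ)
    (hg : AEMeasurable g μ) (hf0 : ∀ u, 0 ≤ f u) (hg0 : ∀ u, 0 ≤ g u)
    (hG : Integrable (fun u => G u ^ 2) μ) (hfg : ∀ u, |f u - g u| ≤ G u * δ) :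
    Integrable (fun u => (exp (-f u / 2) - exp (-g u / 2)) ^ 2) μ :=
  ((hG.mul_const (δ ^ 2)).div_const 4).mono'
    (((hf.neg.div_const 2).exp.sub (hg.neg.div_const 2).exp).pow_const 2).aestronglyMeasurable
    <| ae_of_all _ fun u => by
      rw [Real.norm_of_nonneg (sq_nonneg _), ← mul_pow]
      exact sq_exp_neg_half_sub_exp_neg_half_le (hf0 u) (hg0 u) (hfg u)

theorem integral_sq_exp_neg_half_sub_le [IsFiniteMeasure μ] (hf0 : ∀ u, 0 ≤ f u)
    (hg0 : ∀ u, 0 ≤ g u) (hG : Integrable (fun u => G u ^ 2) μ)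
    (hfg : ∀ u, |f u - g u| ≤ G u * δ) :
    ∫ u, (exp (-f u / 2) - exp (-g u / 2)) ^ 2 ∂μ ≤ (∫ u, G u ^ 2 ∂μ) * δ ^ 2 / 4 := by
  calc ∫ u, (exp (-f u / 2) - exp (-g u / 2)) ^ 2 ∂μ ≤ ∫ u, G u ^ 2 * δ ^ 2 / 4 ∂μ :=
        integral_mono_of_nonneg (ae_of_all _ fun u => sq_nonneg _)
          ((hG.mul_const _).div_const _) <| ae_of_all _ fun u => by
            beta_reduce
            rw [← mul_pow]
            exact sq_exp_neg_half_sub_exp_neg_half_le (hf0 u) (hg0 u) (hfg u)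
    _ = (∫ u, G u ^ 2 ∂μ) * δ ^ 2 / 4 := by rw [integral_div, integral_mul_const]

theorem integral_sq_sqrt_exp_neg_div_sub_le [IsProbabilityMeasure μ] (hf : AEMeasurable f μ)
    (hg : AEMeasurable g μ) (hf0 : ∀ u, 0 ≤ f u) (hg0 : ∀ u, 0 ≤ g u) (hG : MemLp G 2 μ)
    (hfg : ∀ u, |f u - g u| ≤ G u * δ) (hZ₀ : 0 < Z₀) (hZf : Z₀ ≤ ∫ u, exp (-f u) ∂μ)
    (hZg : Z₀ ≤ ∫ u, exp (-g u) ∂μ) :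
    ∫ u, (√(exp (-f u) / ∫ v, exp (-f v) ∂μ) - √(exp (-g u) / ∫ v, exp (-g v) ∂μ)) ^ 2 ∂μ
      ≤ ((∫ u, G u ^ 2 ∂μ) / (2 * Z₀) + (∫ u, G u ∂μ) ^ 2 / (2 * Z₀ ^ 3)) * δ ^ 2 := by
  set Zf := ∫ v, exp (-f v) ∂μ
  set Zg := ∫ v, exp (-g v) ∂μ
  set M₁ := ∫ u, G u ∂μ
  set M₂ := ∫ u, G u ^ 2 ∂μ
  have hZg1 : Zg ≤ 1 := (integral_exp_neg_mem_Ioc hg hg0).2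
  have hsplit : ∀ u, (√(exp (-f u) / Zf) - √(exp (-g u) / Zg)) ^ 2
      ≤ 2 * Zf⁻¹ * (exp (-f u / 2) - exp (-g u / 2)) ^ 2
        + 2 * ((√Zf)⁻¹ - (√Zg)⁻¹) ^ 2 * exp (-g u) := fun u => by
    have hg2 : exp (-g u / 2) ^ 2 = exp (-g u) := by rw [← exp_nat_mul]; ring_nf
    have hZf2 : (√Zf)⁻¹ ^ 2 = Zf⁻¹ := by rw [inv_pow, sq_sqrt (hZ₀.le.trans hZf)]
    rw [sqrt_div (exp_pos _).le, sqrt_div (exp_pos _).le, ← exp_half, ← exp_half,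
      div_eq_mul_inv, div_eq_mul_inv (exp _), ← hg2, ← hZf2]
    nlinarith [sq_nonneg ((√Zf)⁻¹ * (exp (-f u / 2) - exp (-g u / 2))
      - exp (-g u / 2) * ((√Zf)⁻¹ - (√Zg)⁻¹))]
  have hint : Integrable (fun u => 2 * Zf⁻¹ * (exp (-f u / 2) - exp (-g u / 2)) ^ 2) μ :=
    (integrable_sq_exp_neg_half_sub hf hg hf0 hg0 hG.integrable_sq hfg).const_mul _
  have hpp := integral_sq_exp_neg_half_sub_le (μ := μ) hf0 hg0 hG.integrable_sq hfg
  have hZdiff : (Zf - Zg) ^ 2 ≤ (M₁ * δ) ^ 2 := by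
    rw [← sq_abs]
    exact pow_le_pow_left₀ (abs_nonneg _)
      (abs_integral_exp_neg_sub_le hf hg hf0 hg0 (hG.integrable one_le_two) hfg) 2
  have hsZ := (sq_inv_sqrt_sub_inv_sqrt_le hZ₀ hZf hZg).trans
    (div_le_div_of_nonneg_right hZdiff (by positivity))
  calc ∫ u, (√(exp (-f u) / Zf) - √(exp (-g u) / Zg)) ^ 2 ∂μ
      ≤ ∫ u, (2 * Zf⁻¹ * (exp (-f u / 2) - exp (-g u / 2)) ^ 2
          + 2 * ((√Zf)⁻¹ - (√Zg)⁻¹) ^ 2 * exp (-g u)) ∂μ :=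
        integral_mono_of_nonneg (ae_of_all _ fun u => sq_nonneg _)
          (hint.add ((integrable_exp_neg hg hg0).const_mul _)) (ae_of_all _ hsplit)
    _ = 2 * Zf⁻¹ * ∫ u, (exp (-f u / 2) - exp (-g u / 2)) ^ 2 ∂μ
          + 2 * ((√Zf)⁻¹ - (√Zg)⁻¹) ^ 2 * Zg := by
        rw [integral_add hint ((integrable_exp_neg hg hg0).const_mul _), integral_const_mul,
          integral_const_mul]
    _ ≤ 2 * Z₀⁻¹ * (M₂ * δ ^ 2 / 4) + 2 * ((M₁ * δ) ^ 2 / (4 * Z₀ ^ 3)) * 1 := by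
        gcongr
    _ = (M₂ / (2 * Z₀) + M₁ ^ 2 / (2 * Z₀ ^ 3)) * δ ^ 2 := by
        field_simp
        ring

theorem exists_integral_sq_sqrt_exp_neg_div_sub_le [IsProbabilityMeasure μ]
    {E : Type*} [SeminormedAddCommGroup E] {Φ : X → E → ℝ} {W : X → ℝ} {s : Set E}
    (hΦm : ∀ y ∈ s, AEMeasurable (Φ · y) μ) (hΦ0 : ∀ u, ∀ y ∈ s, 0 ≤ Φ u y)
    (hG : MemLp G 2 μ) (hΦG : ∀ u, ∀ y ∈ s, ∀ y' ∈ s, |Φ u y - Φ u y'| ≤ G u * ‖y - y'‖)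
    (hW : AEMeasurable W μ) (hΦW : ∀ u, ∀ y ∈ s, Φ u y ≤ W u) :
    ∃ C, ∀ y ∈ s, ∀ y' ∈ s,
      ∫ u, (√(exp (-Φ u y) / ∫ v, exp (-Φ v y) ∂μ)
        - √(exp (-Φ u y') / ∫ v, exp (-Φ v y') ∂μ)) ^ 2 ∂μ ≤ C ^ 2 * ‖y - y'‖ ^ 2 := by
  rcases s.eq_empty_or_nonempty with rfl | ⟨y₀, hy₀⟩
  · simp
  have hW0 (u : X) : 0 ≤ W u := (hΦ0 u y₀ hy₀).trans (hΦW u y₀ hy₀)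
  set Z₀ := ∫ u, exp (-W u) ∂μ
  have hZ₀ : 0 < Z₀ := (integral_exp_neg_mem_Ioc hW hW0).1
  have hZ₀le : ∀ y ∈ s, Z₀ ≤ ∫ u, exp (-Φ u y) ∂μ := fun y hy =>
    integral_mono (integrable_exp_neg hW hW0) (integrable_exp_neg (hΦm y hy) (hΦ0 · y hy))
      fun u => exp_le_exp.2 (neg_le_neg (hΦW u y hy))
  refine ⟨√((∫ u, G u ^ 2 ∂μ) / (2 * Z₀) + (∫ u, G u ∂μ) ^ 2 / (2 * Z₀ ^ 3)),
    fun y hy y' hy' => ?_⟩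
  rw [sq_sqrt (by positivity)]
  exact integral_sq_sqrt_exp_neg_div_sub_le (hΦm y hy) (hΦm y' hy') (hΦ0 · y hy) (hΦ0 · y' hy')
    hG (hΦG · y hy y' hy') hZ₀ (hZ₀le y hy) (hZ₀le y' hy')

end Hellinger

theorem isBounded_unitCube (d : ℕ) : IsBounded
    (WithLp.ofLp ⁻¹' (Set.univ.pi fun _ => Set.Ioo (0 : ℝ) 1) : Set (EuclideanSpace ℝ (Fin d))) :=
  (PiLp.antilipschitzWith_ofLp 2 _).isBounded_preimage <|
    (Metric.isBounded_Icc (0 : Fin d → ℝ) 1).subset <| by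
      rw [← Set.pi_univ_Icc]; exact Set.pi_mono fun _ _ => Set.Ioo_subset_Icc_self

section Extend

variable {d : ℕ} {D : Set (EuclideanSpace ℝ (Fin d))}

theorem continuous_extend_apply (x : EuclideanSpace ℝ (Fin d)) :
    Continuous fun u : C(closure D, ℝ) => extend D u x := by
  by_cases hx : x ∈ closure D
  · simp only [_root_.extend, dif_pos hx]; exact continuous_eval_const _
  · simp only [_root_.extend, dif_neg hx]; exact continuous_const

theorem extend_sub (u v : C(closure D, ℝ)) : extend D (u - v) = extend D u - extend D v := by
  ext x
  by_cases hx : x ∈ closure D <;> simp [_root_.extend, hx]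

theorem continuousOn_extend (u : C(closure D, ℝ)) : ContinuousOn (extend D u) (closure D) := by
  rw [continuousOn_iff_continuous_domRestrict]
  convert u.continuous using 1
  ext x
  exact dif_pos x.2

variable [CompactSpace (closure D)]

theorem abs_extend_le_norm (u : C(closure D, ℝ)) (x : EuclideanSpace ℝ (Fin d)) :
    |extend D u x| ≤ ‖u‖ := by
  by_cases hx : x ∈ closure D
  · rw [_root_.extend, dif_pos hx]; exact u.norm_coe_le_norm ⟨x, hx⟩
  · simp only [_root_.extend, dif_neg hx, abs_zero, norm_nonneg]

theorem volume_lt_top_of_compactSpace_closure : volume D < ⊤ :=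
  (measure_mono subset_closure).trans_lt (isCompact_iff_compactSpace.2 ‹_›).measure_lt_top

theorem integrableOn_comp_extend {g : ℝ → ℝ} (hg : Continuous g) (u : C(closure D, ℝ)) :
    IntegrableOn (fun x => g (extend D u x)) D :=
  ((hg.comp_continuousOn (continuousOn_extend u)).integrableOn_compact
    (isCompact_iff_compactSpace.2 ‹_›)).mono_set subset_closure

theorem continuous_setIntegral_comp_extend {g : ℝ → ℝ} (hg : Continuous g) :
    Continuous fun u : C(closure D, ℝ) => ∫ x in D, g (extend D u x) := by
  refine continuous_iff_continuousAt.2 fun u₀ => ?_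
  obtain ⟨B, hB⟩ := (isCompact_Icc (a := -(‖u₀‖ + 1)) (b := ‖u₀‖ + 1)).exists_bound_of_continuousOn
    hg.continuousOn
  refine continuousAt_of_dominated (bound := fun _ => B)
    (Filter.Eventually.of_forall fun u => (integrableOn_comp_extend hg u).aestronglyMeasurable)
    ?_ (integrableOn_const volume_lt_top_of_compactSpace_closure.ne)
    (ae_of_all _ fun x => (hg.comp (continuous_extend_apply x)).continuousAt)
  filter_upwards [Metric.ball_mem_nhds u₀ one_pos] with u hu
  refine ae_of_all _ fun x => hB _ (abs_le.1 ((abs_extend_le_norm u x).trans ?_))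
  linarith [norm_le_insert' u u₀, dist_eq_norm u u₀ ▸ Metric.mem_ball.1 hu]

theorem setIntegral_abs_extend_le (u : C(closure D, ℝ)) :
    ∫ x in D, |extend D u x| ≤ volume.real D * ‖u‖ := by
  calc ∫ x in D, |extend D u x| ≤ ∫ _ in D, ‖u‖ :=
        setIntegral_mono (integrableOn_comp_extend continuous_abs u)
          (integrableOn_const volume_lt_top_of_compactSpace_closure.ne) (abs_extend_le_norm u)
    _ = volume.real D * ‖u‖ := setIntegral_const _

theorem continuous_comp_extend {F : Type*} [NormedAddCommGroup F]
    {K : (EuclideanSpace ℝ (Fin d) → ℝ) → F} {CK : ℝ}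
    (hK_add : ∀ u v, IntegrableOn u D → IntegrableOn v D → K (u + v) = K u + K v)
    (hK_bdd : ∀ u, IntegrableOn u D → ‖K u‖ ≤ CK * ∫ x in D, |u x|) :
    Continuous fun u : C(closure D, ℝ) => K (extend D u) := by
  have hint (u : C(closure D, ℝ)) : IntegrableOn (extend D u) D :=
    integrableOn_comp_extend continuous_id u
  refine (LipschitzWith.of_dist_le' (K := |CK| * volume.real D) fun u v => ?_).continuous
  have hsub : K (extend D u) - K (extend D v) = K (extend D (u - v)) := by
    rw [sub_eq_iff_eq_add', ← hK_add _ _ (hint v) (hint (u - v)), extend_sub, add_sub_cancel]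
  rw [dist_eq_norm, dist_eq_norm, hsub, mul_assoc]
  calc ‖K (extend D (u - v))‖ ≤ CK * ∫ x in D, |extend D (u - v) x| := hK_bdd _ (hint _)
    _ ≤ |CK| * ∫ x in D, |extend D (u - v) x| :=
        mul_le_mul_of_nonneg_right (le_abs_self CK) (integral_nonneg fun _ => abs_nonneg _)
    _ ≤ |CK| * (volume.real D * ‖u - v‖) := by gcongr; exact setIntegral_abs_extend_le _

end Extend

section QuadraticForm

variable {E : Type*} [NormedAddCommGroup E] [InnerProductSpace ℝ E]

theorem LinearMap.IsSymmetric.of_rightInverse {S T : E →ₗ[ℝ] E} (hS : S.IsSymmetric)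
    (hST : ∀ z, S (T z) = z) : T.IsSymmetric := fun a w => by
  calc ⟪T a, w⟫ = ⟪T a, S (T w)⟫ := by rw [hST]
    _ = ⟪a, T w⟫ := by rw [← hS, hST]

theorem inner_map_self_nonneg_of_rightInverse {S T : E →ₗ[ℝ] E}
    (hS0 : ∀ z, 0 ≤ ⟪S z, z⟫) (hST : ∀ z, S (T z) = z) (z : E) : 0 ≤ ⟪T z, z⟫ := by
  have h := hS0 (T z)
  rwa [hST, real_inner_comm] at h

theorem abs_inner_map_self_sub_le {A : E →L[ℝ] E} (hA : (A : E →ₗ[ℝ] E).IsSymmetric)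
    (e e' : E) : |⟪A e, e⟫ - ⟪A e', e'⟫| ≤ ‖A‖ * ‖e - e'‖ * (‖e‖ + ‖e'‖) := by
  have h : ⟪A e, e⟫ - ⟪A e', e'⟫ = ⟪A (e - e'), e + e'⟫ := by
    have := hA e e'
    simp only [ContinuousLinearMap.coe_coe] at this
    rw [map_sub, inner_sub_left, inner_add_right, inner_add_right, this,
      real_inner_comm (A e') e]
    ring
  rw [h]
  calc |⟪A (e - e'), e + e'⟫| ≤ ‖A (e - e')‖ * ‖e + e'‖ := abs_real_inner_le_norm _ _
    _ ≤ ‖A‖ * ‖e - e'‖ * (‖e‖ + ‖e'‖) := by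
        gcongr; exacts [A.le_opNorm _, norm_add_le _ _]

theorem inner_map_self_le (A : E →L[ℝ] E) (e : E) : ⟪A e, e⟫ ≤ ‖A‖ * ‖e‖ ^ 2 := by
  calc ⟪A e, e⟫ ≤ ‖A e‖ * ‖e‖ := real_inner_le_norm _ _
    _ ≤ ‖A‖ * ‖e‖ * ‖e‖ := by gcongr; exact A.le_opNorm e
    _ = ‖A‖ * ‖e‖ ^ 2 := by ring

end QuadraticForm

theorem integral_exp_neg_mem_Ioc_and_hellinger_le_of_quadratic {X E : Type*}
    [MeasurableSpace X] {μ : Measure X} [IsProbabilityMeasure μ]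
    [NormedAddCommGroup E] [InnerProductSpace ℝ E] {Φ : X → E → ℝ} {V n : X → ℝ} {k : X → E}
    {A : E →L[ℝ] E} {α : ℝ} (hΦ : ∀ u y, Φ u y = V u + α * ⟪A (y - k u), y - k u⟫)
    (hV : AEMeasurable V μ) (hV0 : ∀ u, 0 ≤ V u) (hk : AEStronglyMeasurable k μ) (hα : 0 ≤ α)
    (hA : (A : E →ₗ[ℝ] E).IsSymmetric) (hA0 : ∀ e, 0 ≤ ⟪A e, e⟫) (hkn : ∀ u, ‖k u‖ ≤ n u)
    (hn : MemLp n 2 μ) :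
    (∀ y, ∫ u, exp (-Φ u y) ∂μ ∈ Set.Ioc 0 1) ∧
    ∀ ρ, ∃ C, ∀ y y', ‖y‖ < ρ → ‖y'‖ < ρ →
      ∫ u, (√(exp (-Φ u y) / ∫ v, exp (-Φ v y) ∂μ)
        - √(exp (-Φ u y') / ∫ v, exp (-Φ v y') ∂μ)) ^ 2 ∂μ ≤ C ^ 2 * ‖y - y'‖ ^ 2 := by
  have hΦ0 (u : X) (y : E) : 0 ≤ Φ u y := hΦ u y ▸ add_nonneg (hV0 u) (mul_nonneg hα (hA0 _))
  have hΦm (y : E) : AEMeasurable (Φ · y) μ := by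
    simp only [hΦ]
    exact hV.add (((by fun_prop : Continuous fun e => ⟪A e, e⟫).comp_aestronglyMeasurable
      (aestronglyMeasurable_const.sub hk)).aemeasurable.const_mul α)
  refine ⟨fun y => integral_exp_neg_mem_Ioc (hΦm y) (hΦ0 · y), fun ρ => ?_⟩
  have hdist {y : E} (hy : ‖y‖ < ρ) (u : X) : ‖y - k u‖ ≤ ρ + n u :=
    (norm_sub_le _ _).trans (add_le_add hy.le (hkn u))
  have hΦ_lip : ∀ u, ∀ y ∈ Metric.ball 0 ρ, ∀ y' ∈ Metric.ball 0 ρ,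
      |Φ u y - Φ u y'| ≤ α * ‖A‖ * (2 * ρ + 2 * n u) * ‖y - y'‖ := by
    intro u y hy y' hy'
    rw [mem_ball_zero_iff] at hy hy'
    have h := abs_inner_map_self_sub_le hA (y - k u) (y' - k u)
    rw [sub_sub_sub_cancel_right] at h
    rw [hΦ, hΦ, add_sub_add_left_eq_sub, ← mul_sub, abs_mul, abs_of_nonneg hα]
    calc α * |⟪A (y - k u), y - k u⟫ - ⟪A (y' - k u), y' - k u⟫|
        ≤ α * (‖A‖ * ‖y - y'‖ * ((ρ + n u) + (ρ + n u))) := by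
          gcongr
          exact h.trans (by gcongr; exacts [hdist hy u, hdist hy' u])
      _ = α * ‖A‖ * (2 * ρ + 2 * n u) * ‖y - y'‖ := by ring
  have hW_bound : ∀ u, ∀ y ∈ Metric.ball 0 ρ, Φ u y ≤ V u + α * (‖A‖ * (ρ + n u) ^ 2) := by
    intro u y hy
    rw [hΦ]
    gcongr
    exact (inner_map_self_le A _).trans (by gcongr; exact hdist (mem_ball_zero_iff.1 hy) u)
  have hG : MemLp (fun u => α * ‖A‖ * (2 * ρ + 2 * n u)) 2 μ :=
    MemLp.const_mul ((memLp_const (2 * ρ)).add (hn.const_mul 2)) _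
  have hW : AEMeasurable (fun u => V u + α * (‖A‖ * (ρ + n u) ^ 2)) μ :=
    hV.add (((hn.aestronglyMeasurable.aemeasurable.const_add ρ).pow_const 2).const_mul _
      |>.const_mul _)
  obtain ⟨C, hC⟩ := exists_integral_sq_sqrt_exp_neg_div_sub_le (fun y _ => hΦm y)
    (fun u y _ => hΦ0 u y) hG hΦ_lip hW hW_bound
  exact ⟨C, fun y y' hy hy' => hC y (mem_ball_zero_iff.2 hy) y' (mem_ball_zero_iff.2 hy')⟩

theorem stmt_8_general
    (d J : ℕ)
    -- D = (0,1)^d ⊂ ℝ^d, the open unit cube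
    (D : Set (EuclideanSpace ℝ (Fin d)))
    (hD : D = WithLp.ofLp ⁻¹' (Set.univ.pi fun _ => Set.Ioo (0 : ℝ) 1))
    -- K : L¹(D) → ℝ^J bounded linear operator (modelled via its action on integrable
    -- representatives: additive, homogeneous and bounded by the L¹(D)-norm)
    (K : (EuclideanSpace ℝ (Fin d) → ℝ) → EuclideanSpace ℝ (Fin J))
    (CK : ℝ)
    (hK_add : ∀ u v, IntegrableOn u D → IntegrableOn v D → K (u + v) = K u + K v)
    (hK_bdd : ∀ u, IntegrableOn u D → ‖K u‖ ≤ CK * ∫ x in D, |u x|)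
    -- Σ : symmetric positive definite J×J matrix, with inverse Σ⁻¹;
    -- |Σ^{-1/2} e|² := ⟨Σ⁻¹ e, e⟩
    (Sig Siginv : EuclideanSpace ℝ (Fin J) →L[ℝ] EuclideanSpace ℝ (Fin J))
    (hSig_sym : ∀ z w, ⟪Sig z, w⟫ = ⟪z, Sig w⟫)
    (hSig_pos : ∀ z, z ≠ 0 → 0 < ⟪Sig z, z⟫)
    (hSiginv : ∀ z, Sig (Siginv z) = z ∧ Siginv (Sig z) = z)
    -- constants
    (ε r b c : ℝ) (hε : ε ∈ Set.Ioo (0 : ℝ) 1) (hr : 0 < r)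
    -- the double-well potential Ψ
    (Ψ : (EuclideanSpace ℝ (Fin d) → ℝ) → ℝ)
    (hΨ : ∀ u, Ψ u = (r / ε ^ b) * ∫ x in D, (1 / 4 : ℝ) * (1 - u x ^ 2) ^ 2)
    -- the data misfit F
    (F : (EuclideanSpace ℝ (Fin d) → ℝ) → EuclideanSpace ℝ (Fin J) → ℝ)
    (hF : ∀ u y, F u y = (1 / (2 * ε ^ (2 * c))) * ⟪Siginv (y - K u), y - K u⟫)
    -- Φ = Ψ + F, as a function of continuous functions on D̄
    (Φ : C(closure D, ℝ) → EuclideanSpace ℝ (Fin J) → ℝ)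
    (hΦ : ∀ u y, Φ u y = Ψ (extend D u) + F (extend D u) y)
    -- μ₀ : Borel probability measure on C(D̄) with finite second L¹(D)-moment
    [MeasurableSpace C(closure D, ℝ)] [BorelSpace C(closure D, ℝ)]
    (μ₀ : Measure C(closure D, ℝ)) [IsProbabilityMeasure μ₀]
    (hmoment : Integrable (fun u : C(closure D, ℝ) => (∫ x in D, |extend D u x|) ^ 2) μ₀)
    -- the normalization constant
    (Z : EuclideanSpace ℝ (Fin J) → ℝ)
    (hZ : ∀ y, Z y = ∫ u, Real.exp (-Φ u y) ∂μ₀) :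
    (∀ y, 0 < Z y ∧ Z y ≤ 1) ∧
    ∀ ρ > (0 : ℝ), ∃ C : ℝ,
      ∀ y y' : EuclideanSpace ℝ (Fin J), ‖y‖ < ρ → ‖y'‖ < ρ →
        (∫ u, (Real.sqrt (Real.exp (-Φ u y) / Z y) -
            Real.sqrt (Real.exp (-Φ u y') / Z y')) ^ 2 ∂μ₀) ≤ C ^ 2 * ‖y - y'‖ ^ 2 := by
  obtain ⟨hε0, -⟩ := hε
  have : CompactSpace (closure D) :=
    isCompact_iff_compactSpace.1 (hD ▸ isBounded_unitCube d).isCompact_closure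
  set k := fun u : C(closure D, ℝ) => K (extend D u)
  set V := fun u : C(closure D, ℝ) =>
    r / ε ^ b * ∫ x in D, (1 / 4 : ℝ) * (1 - extend D u x ^ 2) ^ 2
  have hΦ' (u : C(closure D, ℝ)) (y : EuclideanSpace ℝ (Fin J)) :
      Φ u y = V u + 1 / (2 * ε ^ (2 * c)) * ⟪Siginv (y - k u), y - k u⟫ := by
    rw [hΦ, hΨ, hF]
  have hV : Continuous V := continuous_const.mul <|
    continuous_setIntegral_comp_extend (g := fun t => 1 / 4 * (1 - t ^ 2) ^ 2) (by fun_prop)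
  have hV0 (u : C(closure D, ℝ)) : 0 ≤ V u :=
    mul_nonneg (by positivity) (integral_nonneg fun x => by positivity)
  have hSiginv0 := inner_map_self_nonneg_of_rightInverse (S := Sig) (T := Siginv)
    (fun z => (eq_or_ne z 0).elim (fun h => by simp [h]) fun h => (hSig_pos z h).le)
    fun z => (hSiginv z).1
  have hSig_symm : (Sig : EuclideanSpace ℝ (Fin J) →ₗ[ℝ] _).IsSymmetric := hSig_sym
  have hn : MemLp (fun u => CK * ∫ x in D, |extend D u x|) 2 μ₀ :=
    ((memLp_two_iff_integrable_sq
      (continuous_setIntegral_comp_extend (D := D) continuous_abs).aestronglyMeasurable).2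
        hmoment).const_mul CK
  obtain ⟨hZ_mem, hHellinger⟩ := integral_exp_neg_mem_Ioc_and_hellinger_le_of_quadratic hΦ'
    hV.aemeasurable hV0 (continuous_comp_extend hK_add hK_bdd).aestronglyMeasurable
    (by positivity) (hSig_symm.of_rightInverse fun z => (hSiginv z).1) hSiginv0
    (fun u => hK_bdd _ (integrableOn_comp_extend continuous_id u)) hn
  exact ⟨fun y => hZ y ▸ hZ_mem y, fun ρ _ => by simpa only [hZ] using hHellinger ρ⟩

/-- Let μ₀ be a Borel probability measure on C(D̄) (with the supremum norm) such
that ∫ ‖u‖_{L¹(D)}² dμ₀(u) < ∞, and for y ∈ ℝ^J set Z(y) = ∫ exp(−Φ(u,y)) dμ₀(u), which lies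
in (0,1]. Then for every ρ > 0 there exists C = C(ρ) such that for all y, y' with |y| < ρ,
|y'| < ρ, the squared Hellinger-type integral
∫ ( √(exp(−Φ(u,y))/Z(y)) − √(exp(−Φ(u,y'))/Z(y')) )² dμ₀(u) is at most C²|y − y'|². -/
theorem stmt_8
    (d J : ℕ)
    -- D = (0,1)^d ⊂ ℝ^d, the open unit cube
    (D : Set (EuclideanSpace ℝ (Fin d)))
    (hD : D = WithLp.ofLp ⁻¹' (Set.univ.pi fun _ => Set.Ioo (0 : ℝ) 1))
    -- K : L¹(D) → ℝ^J bounded linear operator (modelled via its action on integrable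
    -- representatives: additive, homogeneous and bounded by the L¹(D)-norm)
    (K : (EuclideanSpace ℝ (Fin d) → ℝ) → EuclideanSpace ℝ (Fin J))
    (CK : ℝ)
    (hK_add : ∀ u v, IntegrableOn u D → IntegrableOn v D → K (u + v) = K u + K v)
    (hK_smul : ∀ (a : ℝ) u, IntegrableOn u D → K (a • u) = a • K u)
    (hK_bdd : ∀ u, IntegrableOn u D → ‖K u‖ ≤ CK * ∫ x in D, |u x|)
    -- Σ : symmetric positive definite J×J matrix, with inverse Σ⁻¹;
    -- |Σ^{-1/2} e|² := ⟨Σ⁻¹ e, e⟩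
    (Sig Siginv : EuclideanSpace ℝ (Fin J) →L[ℝ] EuclideanSpace ℝ (Fin J))
    (hSig_sym : ∀ z w, ⟪Sig z, w⟫ = ⟪z, Sig w⟫)
    (hSig_pos : ∀ z, z ≠ 0 → 0 < ⟪Sig z, z⟫)
    (hSiginv : ∀ z, Sig (Siginv z) = z ∧ Siginv (Sig z) = z)
    -- constants
    (ε r b c : ℝ) (hε : ε ∈ Set.Ioo (0 : ℝ) 1) (hr : 0 < r) (hb : 0 < b) (hc : 0 ≤ c)
    -- the double-well potential Ψ
    (Ψ : (EuclideanSpace ℝ (Fin d) → ℝ) → ℝ)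
    (hΨ : ∀ u, Ψ u = (r / ε ^ b) * ∫ x in D, (1 / 4 : ℝ) * (1 - u x ^ 2) ^ 2)
    -- the data misfit F
    (F : (EuclideanSpace ℝ (Fin d) → ℝ) → EuclideanSpace ℝ (Fin J) → ℝ)
    (hF : ∀ u y, F u y = (1 / (2 * ε ^ (2 * c))) * ⟪Siginv (y - K u), y - K u⟫)
    -- Φ = Ψ + F, as a function of continuous functions on D̄
    (Φ : C(closure D, ℝ) → EuclideanSpace ℝ (Fin J) → ℝ)
    (hΦ : ∀ u y, Φ u y = Ψ (extend D u) + F (extend D u) y)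
    -- μ₀ : Borel probability measure on C(D̄) with finite second L¹(D)-moment
    [MeasurableSpace C(closure D, ℝ)] [BorelSpace C(closure D, ℝ)]
    (μ₀ : Measure C(closure D, ℝ)) [IsProbabilityMeasure μ₀]
    (hmoment : Integrable (fun u : C(closure D, ℝ) => (∫ x in D, |extend D u x|) ^ 2) μ₀)
    -- the normalization constant
    (Z : EuclideanSpace ℝ (Fin J) → ℝ)
    (hZ : ∀ y, Z y = ∫ u, Real.exp (-Φ u y) ∂μ₀) :
    (∀ y, 0 < Z y ∧ Z y ≤ 1) ∧
    ∀ ρ > (0 : ℝ), ∃ C : ℝ,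
      ∀ y y' : EuclideanSpace ℝ (Fin J), ‖y‖ < ρ → ‖y'‖ < ρ →
        (∫ u, (Real.sqrt (Real.exp (-Φ u y) / Z y) -
            Real.sqrt (Real.exp (-Φ u y') / Z y')) ^ 2 ∂μ₀) ≤ C ^ 2 * ‖y - y'‖ ^ 2 :=
  stmt_8_general d J D hD K CK hK_add hK_bdd Sig Siginv hSig_sym hSig_pos hSiginv ε r b c hε hr Ψ hΨ
    F hF Φ hΦ μ₀ hmoment Z hZ
end
end

section
/- For y ∈ ℝ^J define the functional J(u) = (1/2)‖u‖² + (1/2)⟨Σ⁻¹(y − Tu), y − Tu⟩ for u ∈ H, where Σ⁻¹ is the inverse of Σ. Then m := T*((Σ + T T*)⁻¹ y) is the unique global minimizer of J; that is, J(u) > J(m) for every u ∈ H with u ≠ m. -/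
/-!
Writing `u = m + v`, the cross terms of `J(m + v)` cancel because `m` satisfies the first-order
condition `m = T* Σ⁻¹ (y - T m)`: with `x = (Σ + T T*)⁻¹ y` one has `y - T T* x = Σ x`, so
`Σ⁻¹ (y - T m) = x`. Hence `J(m + v) = J(m) + ½‖v‖² + ½⟪Σ⁻¹ T v, T v⟫`, and the last term is
nonnegative because `Σ⁻¹` is positive whenever `Σ` is.
-/

open RealInnerProductSpace ContinuousLinearMap

section InverseOfPositive

variable {F : Type*} [NormedAddCommGroup F] [InnerProductSpace ℝ F]

lemma inner_rightInverse_symm {S P : F → F} (hS_symm : ∀ z w, ⟪S z, w⟫ = ⟪z, S w⟫)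
    (hSP : ∀ z, S (P z) = z) (a b : F) : ⟪P a, b⟫ = ⟪a, P b⟫ :=
  calc ⟪P a, b⟫ = ⟪P a, S (P b)⟫ := by rw [hSP]
    _ = ⟪S (P a), P b⟫ := (hS_symm _ _).symm
    _ = ⟪a, P b⟫ := by rw [hSP]

lemma inner_rightInverse_self_nonneg {S P : F → F} (hS_pos : ∀ z, z ≠ 0 → 0 < ⟪S z, z⟫)
    (hSP : ∀ z, S (P z) = z) (w : F) : 0 ≤ ⟪P w, w⟫ := by
  by_cases h : P w = 0
  · simp [h]
  · have hpos := hS_pos _ h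
    rw [hSP, real_inner_comm] at hpos
    exact hpos.le

end InverseOfPositive

section RegularizedLeastSquares

variable {E F : Type*} [NormedAddCommGroup E] [InnerProductSpace ℝ E]
  [NormedAddCommGroup F] [InnerProductSpace ℝ F]

noncomputable def regularizedLeastSquares (P : F →L[ℝ] F) (T : E →L[ℝ] F) (y : F) (u : E) : ℝ :=
  (1 / 2) * ‖u‖ ^ 2 + (1 / 2) * ⟪P (y - T u), y - T u⟫

lemma regularizedLeastSquares_add {P : F →L[ℝ] F} (hP_symm : ∀ a b, ⟪P a, b⟫ = ⟪a, P b⟫)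
    (T : E →L[ℝ] F) (y : F) {m : E} (hm : ∀ v, ⟪m, v⟫ = ⟪P (y - T m), T v⟫) (v : E) :
    regularizedLeastSquares P T y (m + v) =
      regularizedLeastSquares P T y m + (1 / 2) * ‖v‖ ^ 2 + (1 / 2) * ⟪P (T v), T v⟫ := by
  have hres : y - T (m + v) = (y - T m) - T v := by rw [map_add]; abel
  have hquad : ∀ r w : F, ⟪P (r - w), r - w⟫ = ⟪P r, r⟫ - 2 * ⟪P r, w⟫ + ⟪P w, w⟫ := by
    intro r w
    rw [map_sub, inner_sub_left, inner_sub_right, inner_sub_right, hP_symm w r, real_inner_comm w]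
    ring
  rw [regularizedLeastSquares, regularizedLeastSquares, hres, norm_add_sq_real, hquad, hm v]
  ring

lemma regularizedLeastSquares_lt_of_ne {P : F →L[ℝ] F} (hP_symm : ∀ a b, ⟪P a, b⟫ = ⟪a, P b⟫)
    (hP_nonneg : ∀ w, 0 ≤ ⟪P w, w⟫) (T : E →L[ℝ] F) (y : F) {m : E}
    (hm : ∀ v, ⟪m, v⟫ = ⟪P (y - T m), T v⟫) {u : E} (hu : u ≠ m) :
    regularizedLeastSquares P T y m < regularizedLeastSquares P T y u := by
  have hv : 0 < ‖u - m‖ := norm_pos_iff.mpr (sub_ne_zero_of_ne hu)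
  have hsplit := regularizedLeastSquares_add hP_symm T y hm (u - m)
  rw [add_sub_cancel] at hsplit
  nlinarith [hP_nonneg (T (u - m))]

end RegularizedLeastSquares

/-- For y ∈ ℝ^J define J(u) = (1/2)‖u‖² + (1/2)⟨Σ⁻¹(y − Tu), y − Tu⟩ for
u ∈ H, where Σ⁻¹ is the inverse of Σ. Then m := T*((Σ + T T*)⁻¹ y) is the unique global
minimizer of J; that is, J(u) > J(m) for every u ∈ H with u ≠ m. Here H is a real Hilbert
space, T : H → ℝ^J is a continuous linear map with Hilbert adjoint T*, and Σ : ℝ^J → ℝ^J is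
self-adjoint positive definite. -/
theorem stmt_14
    {H : Type*} [NormedAddCommGroup H] [InnerProductSpace ℝ H] [CompleteSpace H]
    (J : ℕ)
    (T : H →L[ℝ] EuclideanSpace ℝ (Fin J))
    (Sig : EuclideanSpace ℝ (Fin J) →L[ℝ] EuclideanSpace ℝ (Fin J))
    (hSig_sym : ∀ z w, ⟪Sig z, w⟫ = ⟪z, Sig w⟫)
    (hSig_pos : ∀ z, z ≠ 0 → 0 < ⟪Sig z, z⟫)
    -- Σ⁻¹ : the inverse of Σ
    (Siginv : EuclideanSpace ℝ (Fin J) →L[ℝ] EuclideanSpace ℝ (Fin J))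
    (hSiginv : ∀ z, Sig (Siginv z) = z ∧ Siginv (Sig z) = z)
    -- (Σ + T T*)⁻¹ : the inverse of Σ + T T*
    (Ainv : EuclideanSpace ℝ (Fin J) →L[ℝ] EuclideanSpace ℝ (Fin J))
    (hAinv : ∀ z, (Sig + T ∘L T.adjoint) (Ainv z) = z ∧ Ainv ((Sig + T ∘L T.adjoint) z) = z)
    (y : EuclideanSpace ℝ (Fin J))
    -- the functional J
    (Jfun : H → ℝ)
    (hJfun : ∀ u, Jfun u = (1 / 2) * ‖u‖ ^ 2 + (1 / 2) * ⟪Siginv (y - T u), y - T u⟫)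
    -- the candidate minimizer m
    (m : H) (hm : m = T.adjoint (Ainv y)) :
    ∀ u : H, u ≠ m → Jfun m < Jfun u := by
  have hSigSiginv : ∀ z, Sig (Siginv z) = z := fun z => (hSiginv z).1
  have hresidual : y - T m = Sig (Ainv y) := by
    have hdef := (hAinv y).1
    rw [add_apply, comp_apply] at hdef
    rw [hm]
    exact (eq_sub_of_add_eq hdef).symm
  have hoptimal : ∀ v, ⟪m, v⟫ = ⟪Siginv (y - T m), T v⟫ := fun v => by
    rw [hresidual, (hSiginv _).2, hm, adjoint_inner_left]
  have hJ : Jfun = regularizedLeastSquares Siginv T y := funext hJfun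
  intro u hu
  rw [hJ]
  exact regularizedLeastSquares_lt_of_ne (inner_rightInverse_symm hSig_sym hSigSiginv)
    (inner_rightInverse_self_nonneg hSig_pos hSigSiginv) T y hoptimal hu
end
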